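/- Let μ₀, μ₁, μ₀*, μ₁* ∈ [0,1] and π₀*, π₁* ∈ [0,1] be real numbers, and define Ψ = (μ₁ + π₁*(μ₁* - μ₁)) - (μ₀ + π₀*(μ₀* - μ₀)) and Ψ̃ = μ₁ - μ₀. Then Ψ̃ - (π₁*·μ₁ + π₀*(1 - μ₀)) ≤ Ψ ≤ Ψ̃ + (π₁*(1 - μ₁) + π₀*·μ₀). -/
import Mathlib

theorem stmt_1 (μ₀ μ₁ μ₀s μ₁s π₀s π₁s : ℝ)
    (hμ₀ : 0 ≤ μ₀ ∧ μ₀ ≤ 1) (hμ₁ : 0 ≤ μ₁ ∧ μ₁ ≤ 1)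
    (hμ₀s : 0 ≤ μ₀s ∧ μ₀s ≤ 1) (hμ₁s : 0 ≤ μ₁s ∧ μ₁s ≤ 1)
    (hπ₀s : 0 ≤ π₀s ∧ π₀s ≤ 1) (hπ₁s : 0 ≤ π₁s ∧ π₁s ≤ 1)
    (Ψ Ψt : ℝ)
    (hΨ : Ψ = (μ₁ + π₁s * (μ₁s - μ₁)) - (μ₀ + π₀s * (μ₀s - μ₀)))
    (hΨt : Ψt = μ₁ - μ₀) :
    Ψt - (π₁s * μ₁ + π₀s * (1 - μ₀)) ≤ Ψ ∧
    Ψ ≤ Ψt + (π₁s * (1 - μ₁) + π₀s * μ₀) := by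
  subst hΨ hΨt
  constructor <;> nlinarith [mul_nonneg hπ₁s.1 hμ₁s.1, mul_nonneg hπ₀s.1 hμ₀s.1,
    mul_le_mul_of_nonneg_left hμ₁s.2 hπ₁s.1, mul_le_mul_of_nonneg_left hμ₀s.2 hπ₀s.1]
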